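/- arXiv:2204.06600 — 2 statements merged into one kernel-verified Lean document; each statement's English description precedes it below -/
import Mathlib

section
/- Assume C_j := Σ_{n∈ℕ} ξ̃_j(n) < ∞ for every j ∈ {1,…,J}, and let θ̃ : K → ℝ be a strictly positive function satisfying the reduced balance equations. Define ξ_j(n) := C_j^{-1}·ξ̃_j(n) for n ∈ ℕ, θ(k) := θ̃(k) / (Σ_{k'∈K} θ̃(k')) for k ∈ K, and π(n,k) := (Π_{j=1}^J ξ_j(n_j)) · θ(k) for (n,k) ∈ ℕ^J × K. Then π is a probability distribution on ℕ^J × K (π ≥ 0 and Σ_{(n,k)} π(n,k) = 1), π satisfies the global balance equations, and π factorizes as the product π(n,k) = ξ_1(n_1)·…·ξ_J(n_J)·θ(k) where each ξ_j is a probability distribution on ℕ and θ is a probability distribution on K. -/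
open Finset

/-- `k + e_i`: add one unit in coordinate `i`. -/
def addE {J : ℕ} (k : Fin J → ℕ) (i : Fin J) : Fin J → ℕ :=
  Function.update k i (k i + 1)

/-- `k - e_i`: remove one unit in coordinate `i`. -/
def subE {J : ℕ} (k : Fin J → ℕ) (i : Fin J) : Fin J → ℕ :=
  Function.update k i (k i - 1)

/-- The set `M(k)` of locations attaining the maximal difference `b_i - k_i`. -/
def Mset {J : ℕ} (b k : Fin J → ℕ) : Finset (Fin J) :=
  Finset.univ.filter (fun i => b i - k i = Finset.univ.sup (fun j => b j - k j))

/-- Routing probability `p_i(k)` (strict load balancing policy). -/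
noncomputable def routeP {J : ℕ} (b k : Fin J → ℕ) (i : Fin J) : ℝ :=
  if i ∈ Mset b k then 1 / ((Mset b k).card : ℝ) else 0

/-- The inventory state space `K = {k : 0 ≤ k_j ≤ b_j}` as a `Finset`. -/
def Kfin {J : ℕ} (b : Fin J → ℕ) : Finset (Fin J → ℕ) :=
  Fintype.piFinset fun j => Finset.range (b j + 1)

/-- The reduced balance equation at a single state `k`. -/
def RBEat {J : ℕ} (lam : Fin J → ℝ) (b : Fin J → ℕ) (ν : ℝ)
    (θ : (Fin J → ℕ) → ℝ) (k : Fin J → ℕ) : Prop :=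
  θ k * ((∑ i ∈ Finset.univ.filter (fun i => 0 < k i), lam i)
      + ∑ i ∈ Finset.univ.filter (fun i => k i < b i), ν * routeP b k i)
    = (∑ i ∈ Finset.univ.filter (fun i => k i < b i), θ (addE k i) * lam i)
      + ∑ i ∈ Finset.univ.filter (fun i => 0 < k i),
          θ (subE k i) * ν * routeP b (subE k i) i

/-- `θ` satisfies the reduced balance equations (at every `k ∈ K`). -/
def ReducedBalance {J : ℕ} (lam : Fin J → ℝ) (b : Fin J → ℕ) (ν : ℝ)
    (θ : (Fin J → ℕ) → ℝ) : Prop :=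
  ∀ k : Fin J → ℕ, (∀ j, k j ≤ b j) → RBEat lam b ν θ k

/-- The global balance equation at a single state `(n, k)`. -/
def GBEat {J : ℕ} (lam : Fin J → ℝ) (b : Fin J → ℕ) (μ : Fin J → ℕ → ℝ) (ν : ℝ)
    (x : (Fin J → ℕ) → (Fin J → ℕ) → ℝ) (n k : Fin J → ℕ) : Prop :=
  x n k * ((∑ i ∈ Finset.univ.filter (fun i => 0 < k i), lam i)
      + (∑ i ∈ Finset.univ.filter (fun i => 0 < n i ∧ 0 < k i), μ i (n i))
      + ∑ i ∈ Finset.univ.filter (fun i => k i < b i), ν * routeP b k i)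
    = (∑ i ∈ Finset.univ.filter (fun i => 0 < n i ∧ 0 < k i), x (subE n i) k * lam i)
      + (∑ i ∈ Finset.univ.filter (fun i => k i < b i),
          x (addE n i) (addE k i) * μ i (n i + 1))
      + ∑ i ∈ Finset.univ.filter (fun i => 0 < k i),
          x n (subE k i) * ν * routeP b (subE k i) i

/-- `x` satisfies the global balance equations (at every `(n,k) ∈ ℕ^J × K`). -/
def GlobalBalance {J : ℕ} (lam : Fin J → ℝ) (b : Fin J → ℕ) (μ : Fin J → ℕ → ℝ)
    (ν : ℝ) (x : (Fin J → ℕ) → (Fin J → ℕ) → ℝ) : Prop :=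
  ∀ n k : Fin J → ℕ, (∀ j, k j ≤ b j) → GBEat lam b μ ν x n k

/-- `ξ̃_j(n) = ∏_{ℓ=1}^n λ_j / μ_j(ℓ)`. -/
noncomputable def xiT {J : ℕ} (lam : Fin J → ℝ) (μ : Fin J → ℕ → ℝ)
    (j : Fin J) (n : ℕ) : ℝ :=
  ∏ l ∈ Finset.Icc 1 n, lam j / μ j l

/-- `ξ̃(n) = ∏_j ξ̃_j(n_j)`. -/
noncomputable def xiTvec {J : ℕ} (lam : Fin J → ℝ) (μ : Fin J → ℕ → ℝ)
    (n : Fin J → ℕ) : ℝ :=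
  ∏ j, xiT lam μ j (n j)

/-- The transition rates `q_red` of the reduced (inventory-replenishment) process. -/
noncomputable def qred {J : ℕ} (lam : Fin J → ℝ) (b : Fin J → ℕ) (ν : ℝ)
    (k k' : Fin J → ℕ) : ℝ :=
  (∑ i : Fin J, (if 0 < k i ∧ k' = subE k i then lam i else 0))
    + ∑ i : Fin J, (if k i < b i ∧ k' = addE k i then ν * routeP b k i else 0)

/-- The candidate stationary measure for base stock levels all equal to one. -/
noncomputable def thetaOne {J : ℕ} (lam : Fin J → ℝ) (ν : ℝ)
    (k : Fin J → ℕ) : ℝ :=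
  (∏ l ∈ Finset.range (∑ j, k j), 1 / ((J : ℝ) - (l : ℝ)))
    * (∏ j, (1 / lam j) ^ (k j)) * (1 / ν) ^ (J - ∑ j, k j)


lemma hasSum_pi_prod' (J : ℕ) : ∀ (g : Fin J → ℕ → ℝ), (∀ j, Summable (g j)) →
    (∀ j n, 0 ≤ g j n) →
    HasSum (fun n : Fin J → ℕ => ∏ j, g j (n j)) (∏ j, ∑' m, g j m) := by
  induction J with
  | zero =>
      intro g _ _
      simpa using hasSum_unique (fun n : Fin 0 → ℕ => ∏ j, g j (n j))
  | succ m ih =>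
      intro g hs hnn
      have hF := ih (fun j => g j.succ) (fun j => hs _) (fun j n => hnn _ _)
      have h0 : HasSum (g 0) (∑' n, g 0 n) := (hs 0).hasSum
      have hsumm : Summable (fun p : ℕ × (Fin m → ℕ) => g 0 p.1 * ∏ j, g j.succ (p.2 j)) := by
        apply Summable.mul_of_nonneg (hs 0) hF.summable
        · exact fun n => hnn 0 n
        · exact fun p => Finset.prod_nonneg fun j _ => hnn _ _
      have hmul := h0.mul hF hsumm
      rw [← (Fin.consEquiv (fun _ : Fin (m+1) => ℕ)).hasSum_iff]
      have he : ((fun n : Fin (m+1) → ℕ => ∏ j, g j (n j)) ∘ (Fin.consEquiv fun _ => ℕ))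
          = fun p : ℕ × (Fin m → ℕ) => g 0 p.1 * ∏ j, g j.succ (p.2 j) := by
        funext p
        simp [Fin.consEquiv, Fin.prod_univ_succ]
      rw [he, Fin.prod_univ_succ]
      exact hmul

lemma xiT_pos' {J : ℕ} {lam : Fin J → ℝ} {μ : Fin J → ℕ → ℝ}
    (hlam : ∀ j, 0 < lam j) (hμ : ∀ j n, 1 ≤ n → 0 < μ j n) (j : Fin J) (n : ℕ) :
    0 < xiT lam μ j n := by
  apply Finset.prod_pos
  intro l hl
  exact div_pos (hlam j) (hμ j l (Finset.mem_Icc.mp hl).1)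


lemma xiT_succ' {J : ℕ} (lam : Fin J → ℝ) (μ : Fin J → ℕ → ℝ) (j : Fin J) (n : ℕ) :
    xiT lam μ j (n + 1) = xiT lam μ j n * (lam j / μ j (n + 1)) := by
  unfold xiT
  rw [Finset.prod_Icc_succ_top (by omega)]

lemma xiTvec_update' {J : ℕ} (lam : Fin J → ℝ) (μ : Fin J → ℕ → ℝ)
    (n : Fin J → ℕ) (i : Fin J) (v : ℕ) :
    xiTvec lam μ (Function.update n i v)
      = xiT lam μ i v * ∏ j ∈ {i}ᶜ, xiT lam μ j (n j) := by
  unfold xiTvec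
  rw [Fintype.prod_eq_mul_prod_compl i, Function.update_self]
  congr 1
  refine Finset.prod_congr rfl fun j hj => ?_
  have hji : j ≠ i := by simpa using hj
  rw [Function.update_of_ne hji]

lemma xiTvec_self {J : ℕ} (lam : Fin J → ℝ) (μ : Fin J → ℕ → ℝ)
    (n : Fin J → ℕ) (i : Fin J) :
    xiTvec lam μ n = xiT lam μ i (n i) * ∏ j ∈ {i}ᶜ, xiT lam μ j (n j) := by
  have := xiTvec_update' lam μ n i (n i)
  rwa [Function.update_eq_self] at this

lemma xiTvec_subE {J : ℕ} {lam : Fin J → ℝ} {μ : Fin J → ℕ → ℝ}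
    (hμ : ∀ j n, 1 ≤ n → 0 < μ j n)
    (n : Fin J → ℕ) (i : Fin J) (hni : 0 < n i) :
    xiTvec lam μ (subE n i) * lam i = xiTvec lam μ n * μ i (n i) := by
  obtain ⟨m, hm⟩ : ∃ m, n i = m + 1 := ⟨n i - 1, (Nat.succ_pred_eq_of_pos hni).symm⟩
  have hμne : μ i (n i) ≠ 0 := (hμ i (n i) (by omega)).ne'
  unfold subE
  rw [xiTvec_update' , xiTvec_self lam μ n i, hm]
  simp only [Nat.add_sub_cancel]
  rw [xiT_succ']
  rw [hm] at hμne
  field_simp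

lemma xiTvec_addE {J : ℕ} {lam : Fin J → ℝ} {μ : Fin J → ℕ → ℝ}
    (hμ : ∀ j n, 1 ≤ n → 0 < μ j n)
    (n : Fin J → ℕ) (i : Fin J) :
    xiTvec lam μ (addE n i) * μ i (n i + 1) = xiTvec lam μ n * lam i := by
  have hμne : μ i (n i + 1) ≠ 0 := (hμ i (n i + 1) (by omega)).ne'
  unfold addE
  rw [xiTvec_update', xiTvec_self lam μ n i, xiT_succ']
  field_simp

lemma aux_gbe {J : ℕ} (lam : Fin J → ℝ) (b : Fin J → ℕ) (μ : Fin J → ℕ → ℝ)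
    (hμ : ∀ j n, 1 ≤ n → 0 < μ j n) (ν : ℝ)
    (θ : (Fin J → ℕ) → ℝ) (hbal : ReducedBalance lam b ν θ) (D : ℝ)
    (x : (Fin J → ℕ) → (Fin J → ℕ) → ℝ)
    (hx : ∀ n k, x n k = D * xiTvec lam μ n * θ k) :
    GlobalBalance lam b μ ν x := by
  intro n k hk
  have hrbe := hbal k hk
  unfold RBEat at hrbe
  unfold GBEat
  simp only [hx]
  have e1 : ∑ i ∈ Finset.univ.filter (fun i => 0 < n i ∧ 0 < k i),
      D * xiTvec lam μ (subE n i) * θ k * lam i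
      = D * xiTvec lam μ n * θ k
        * ∑ i ∈ Finset.univ.filter (fun i => 0 < n i ∧ 0 < k i), μ i (n i) := by
    rw [Finset.mul_sum]
    refine Finset.sum_congr rfl fun i hi => ?_
    have hni := (Finset.mem_filter.mp hi).2.1
    linear_combination (D * θ k) * xiTvec_subE hμ n i hni
  have e2 : ∑ i ∈ Finset.univ.filter (fun i => k i < b i),
      D * xiTvec lam μ (addE n i) * θ (addE k i) * μ i (n i + 1)
      = D * xiTvec lam μ n
        * ∑ i ∈ Finset.univ.filter (fun i => k i < b i), θ (addE k i) * lam i := by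
    rw [Finset.mul_sum]
    refine Finset.sum_congr rfl fun i hi => ?_
    linear_combination (D * θ (addE k i)) * xiTvec_addE hμ n i
  have e3 : ∑ i ∈ Finset.univ.filter (fun i => 0 < k i),
      D * xiTvec lam μ n * θ (subE k i) * ν * routeP b (subE k i) i
      = D * xiTvec lam μ n
        * ∑ i ∈ Finset.univ.filter (fun i => 0 < k i),
            θ (subE k i) * ν * routeP b (subE k i) i := by
    rw [Finset.mul_sum]
    refine Finset.sum_congr rfl fun i _ => ?_
    ring
  rw [e1, e2, e3]
  linear_combination (D * xiTvec lam μ n) * hrbe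

/-- under ergodicity, the normalised product form `π` is a probability
distribution satisfying the global balance equations, and it factorizes into the
probability distributions `ξ_j` on `ℕ` and `θ` on `K`. -/
theorem stationary_distribution_product_form
    (J : ℕ) (hJ : 1 < J) (lam : Fin J → ℝ) (hlam : ∀ j, 0 < lam j)
    (b : Fin J → ℕ) (hb : ∀ j, 1 ≤ b j)
    (μ : Fin J → ℕ → ℝ) (hμ : ∀ j n, 1 ≤ n → 0 < μ j n)
    (ν : ℝ) (hν : 0 < ν)
    (hsum : ∀ j, Summable (fun n => xiT lam μ j n))
    (θt : (Fin J → ℕ) → ℝ) (hθtpos : ∀ k, (∀ j, k j ≤ b j) → 0 < θt k)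
    (hθtbal : ReducedBalance lam b ν θt)
    (C : Fin J → ℝ) (hC : ∀ j, C j = ∑' n, xiT lam μ j n)
    (ξ : Fin J → ℕ → ℝ) (hξ : ∀ j n, ξ j n = (C j)⁻¹ * xiT lam μ j n)
    (θ : (Fin J → ℕ) → ℝ) (hθ : ∀ k, θ k = θt k / ∑ k' ∈ Kfin b, θt k')
    (π : (Fin J → ℕ) → (Fin J → ℕ) → ℝ)
    (hπ : ∀ n k, π n k = (∏ j, ξ j (n j)) * θ k) :
    (∀ n k, k ∈ Kfin b → 0 ≤ π n k) ∧
      (∑' p : (Fin J → ℕ) × {k // k ∈ Kfin b}, π p.1 p.2.1 = 1) ∧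
      GlobalBalance lam b μ ν π ∧
      (∀ n k, π n k = (∏ j, ξ j (n j)) * θ k) ∧
      (∀ j, (∀ n, 0 ≤ ξ j n) ∧ ∑' n, ξ j n = 1) ∧
      ((∀ k, k ∈ Kfin b → 0 ≤ θ k) ∧ ∑ k ∈ Kfin b, θ k = 1) := by
  have hxiTpos : ∀ j n, 0 < xiT lam μ j n := xiT_pos' hlam hμ
  have hCpos : ∀ j, 0 < C j := by
    intro j
    have h00 : xiT lam μ j 0 = 1 := by
      unfold xiT
      rw [Finset.Icc_eq_empty (by omega), Finset.prod_empty]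
    have h0 : (1:ℝ) ≤ ∑' n, xiT lam μ j n := by
      have := Summable.le_tsum (hsum j) 0 (fun m _ => (hxiTpos j m).le)
      rwa [h00] at this
    rw [hC j]; linarith
  have hCne : ∀ j, C j ≠ 0 := fun j => (hCpos j).ne'
  have hξpos : ∀ j n, 0 < ξ j n := fun j n => by
    rw [hξ]; exact mul_pos (inv_pos.2 (hCpos j)) (hxiTpos j n)
  have hmemK : ∀ k : Fin J → ℕ, k ∈ Kfin b ↔ ∀ j, k j ≤ b j := by
    intro k
    simp [Kfin, Fintype.mem_piFinset, Nat.lt_succ_iff]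
  have hS : 0 < ∑ k' ∈ Kfin b, θt k' := by
    apply Finset.sum_pos
    · intro k hkK; exact hθtpos k ((hmemK k).1 hkK)
    · exact ⟨fun _ => 0, (hmemK _).2 fun j => Nat.zero_le _⟩
  have hθpos : ∀ k, (∀ j, k j ≤ b j) → 0 < θ k := fun k hkb => by
    rw [hθ]; exact div_pos (hθtpos k hkb) hS
  have hθnn : ∀ k, k ∈ Kfin b → 0 ≤ θ k := fun k hk => (hθpos k ((hmemK k).1 hk)).le
  have hξsum1 : ∀ j, HasSum (ξ j) 1 := by
    intro j
    have h1 : HasSum (xiT lam μ j) (C j) := by rw [hC]; exact (hsum j).hasSum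
    have h2 := h1.mul_left (C j)⁻¹
    rw [inv_mul_cancel₀ (hCne j)] at h2
    have h3 : ξ j = fun n => (C j)⁻¹ * xiT lam μ j n := funext (hξ j)
    rw [h3]; exact h2
  have hθsum1 : ∑ k ∈ Kfin b, θ k = 1 := by
    have : ∀ k ∈ Kfin b, θ k = θt k / ∑ k' ∈ Kfin b, θt k' := fun k _ => hθ k
    rw [Finset.sum_congr rfl this, ← Finset.sum_div, div_self hS.ne']
  have hFsum : HasSum (fun n : Fin J → ℕ => ∏ j, ξ j (n j)) 1 := by
    have h := hasSum_pi_prod' J ξ (fun j => (hξsum1 j).summable) (fun j n => (hξpos j n).le)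
    have ht : ∀ j, ∑' m, ξ j m = 1 := fun j => (hξsum1 j).tsum_eq
    simpa [ht] using h
  have hGsum : HasSum (fun k : {k // k ∈ Kfin b} => θ k.1) 1 := by
    have h := hasSum_fintype (fun k : {k // k ∈ Kfin b} => θ k.1)
    rwa [Finset.sum_coe_sort (Kfin b) θ, hθsum1] at h
  have hbig : HasSum (fun p : (Fin J → ℕ) × {k // k ∈ Kfin b} => π p.1 p.2.1) 1 := by
    have hsummable : Summable (fun p : (Fin J → ℕ) × {k // k ∈ Kfin b} =>
        (∏ j, ξ j (p.1 j)) * θ p.2.1) := by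
      apply Summable.mul_of_nonneg hFsum.summable hGsum.summable
      · exact fun n => Finset.prod_nonneg fun j _ => (hξpos j (n j)).le
      · exact fun k => hθnn k.1 k.2
    have h := hFsum.mul hGsum hsummable
    rw [one_mul] at h
    have hfe : (fun p : (Fin J → ℕ) × {k // k ∈ Kfin b} => π p.1 p.2.1)
        = fun p => (∏ j, ξ j (p.1 j)) * θ p.2.1 := funext fun p => hπ p.1 p.2.1
    rw [hfe]; exact h
  have hθRBE : ReducedBalance lam b ν θ := by
    intro k hk
    have h := hθtbal k hk
    unfold RBEat at h ⊢
    simp only [hθ, div_mul_eq_mul_div, ← Finset.sum_div, ← add_div]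
    rw [h]
  have hD : ∀ n k, π n k = (∏ j, (C j)⁻¹) * xiTvec lam μ n * θ k := by
    intro n k
    rw [hπ]
    congr 1
    have : ∀ j ∈ Finset.univ, ξ j (n j) = (C j)⁻¹ * xiT lam μ j (n j) :=
      fun j _ => hξ j (n j)
    rw [Finset.prod_congr rfl this, Finset.prod_mul_distrib]
    rfl
  have hGB := aux_gbe lam b μ hμ ν θ hθRBE _ π hD
  refine ⟨?_, hbig.tsum_eq, hGB, hπ, ?_, ⟨hθnn, hθsum1⟩⟩
  · intro n k hkK
    rw [hπ]
    exact mul_nonneg (Finset.prod_nonneg fun j _ => (hξpos j (n j)).le) (hθnn k hkK)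
  · intro j
    exact ⟨fun n => (hξpos j n).le, (hξsum1 j).tsum_eq⟩
end

section
/- Assume J = 2 and b_1 ≥ b_2. Let θ : K → ℝ be nonnegative, satisfy the reduced balance equations, and have total mass Σ_{k∈K} θ(k) = 1; write θ(k_1,k_2) for its values. Then for every integer ℓ_1 with 0 ≤ ℓ_1 ≤ b_1 − b_2: Σ_{k_2=0}^{b_2} θ(ℓ_1, k_2) = (Σ_{k_2=0}^{b_2} θ(0, k_2)) · (ν/λ_1)^{ℓ_1}. -/
open Finset

/-!
Sum the reduced balance equations over the slice `{k ∈ K : k₁ = a}`. Moves of the other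
coordinates stay inside the slice and cancel, so by induction on `a` the total rate
`λ₁ θ(k₁ = a + 1)` of demand across the cut between the slices `a` and `a + 1` equals the
replenishment rate across it, `Σ_{k₁ = a} θ(k) ν p₁(k)`. While `a + b₂ < b₁` the first location
is strictly the most depleted one, so `p₁ = 1` on the slice and the cut equation reads
`λ₁ θ(k₁ = a + 1) = ν θ(k₁ = a)`. The argument works for any number of locations.
-/

section Inventory

variable {J : ℕ} {b : Fin J → ℕ} {k : Fin J → ℕ} {i j : Fin J}

@[simp] lemma addE_apply_self : addE k i i = k i + 1 := by simp [addE]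

@[simp] lemma addE_apply_of_ne (h : j ≠ i) : addE k i j = k j := by simp [addE, h]

@[simp] lemma subE_apply_self : subE k i i = k i - 1 := by simp [subE]

@[simp] lemma subE_apply_of_ne (h : j ≠ i) : subE k i j = k j := by simp [subE, h]

@[simp] lemma subE_addE : subE (addE k i) i = k := by simp [subE, addE]

lemma addE_subE (h : 0 < k i) : addE (subE k i) i = k := by
  ext j
  rcases eq_or_ne j i with rfl | hj <;> simp [*]; omega

lemma mem_Kfin : k ∈ Kfin b ↔ ∀ j, k j ≤ b j := by
  simp [Kfin]

lemma addE_mem_Kfin (hk : k ∈ Kfin b) (h : k i < b i) : addE k i ∈ Kfin b := by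
  rw [mem_Kfin] at *
  intro j
  rcases eq_or_ne j i with rfl | hj <;> simp [*]

lemma subE_mem_Kfin (hk : k ∈ Kfin b) : subE k i ∈ Kfin b := by
  rw [mem_Kfin] at *
  intro j
  have := hk j
  rcases eq_or_ne j i with rfl | hj <;> simp [*]; omega

def Kslice (b : Fin J → ℕ) (i : Fin J) (a : ℕ) : Finset (Fin J → ℕ) :=
  (Kfin b).filter fun k => k i = a

lemma mem_Kslice {a : ℕ} : k ∈ Kslice b i a ↔ k ∈ Kfin b ∧ k i = a := Finset.mem_filter

lemma sum_Kslice_addE_of_ne {M : Type*} [AddCommMonoid M] (hji : j ≠ i) (a : ℕ)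
    (f : (Fin J → ℕ) → M) :
    ∑ k ∈ (Kslice b i a).filter (fun k => k j < b j), f (addE k j)
      = ∑ k ∈ (Kslice b i a).filter (fun k => 0 < k j), f k := by
  refine Finset.sum_nbij' (addE · j) (subE · j) ?_ ?_ ?_ ?_ fun _ _ => rfl
  · intro k hk
    simp only [Finset.mem_filter, mem_Kslice] at hk ⊢
    exact ⟨⟨addE_mem_Kfin hk.1.1 hk.2, by simp [hji.symm, hk.1.2]⟩, by simp⟩
  · intro k hk
    simp only [Finset.mem_filter, mem_Kslice] at hk ⊢
    exact ⟨⟨subE_mem_Kfin hk.1.1, by simp [hji.symm, hk.1.2]⟩, by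
      have := (mem_Kfin.1 hk.1.1) j; simp; omega⟩
  · intro k _; simp
  · intro k hk
    simp only [Finset.mem_filter] at hk
    exact addE_subE hk.2

lemma sum_Kslice_addE_self {M : Type*} [AddCommMonoid M] (a : ℕ) (f : (Fin J → ℕ) → M) :
    ∑ k ∈ (Kslice b i a).filter (fun k => k i < b i), f (addE k i)
      = ∑ k ∈ Kslice b i (a + 1), f k := by
  refine Finset.sum_nbij' (addE · i) (subE · i) ?_ ?_ ?_ ?_ fun _ _ => rfl
  · intro k hk
    simp only [Finset.mem_filter, mem_Kslice] at hk ⊢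
    exact ⟨addE_mem_Kfin hk.1.1 hk.2, by simp [hk.1.2]⟩
  · intro k hk
    simp only [Finset.mem_filter, mem_Kslice] at hk ⊢
    have := (mem_Kfin.1 hk.1) i
    exact ⟨⟨subE_mem_Kfin hk.1, by simp [hk.2]⟩, by simp; omega⟩
  · intro k _; simp
  · intro k hk
    simp only [mem_Kslice] at hk
    exact addE_subE (by omega)

variable (b) in
def sliceMass (θ : (Fin J → ℕ) → ℝ) (i : Fin J) (a : ℕ) : ℝ :=
  ∑ k ∈ Kslice b i a, θ k

variable (b) in
noncomputable def sliceUpFlux (ν : ℝ) (θ : (Fin J → ℕ) → ℝ) (i : Fin J) (a : ℕ) : ℝ :=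
  ∑ k ∈ (Kslice b i a).filter (fun k => k i < b i), θ k * ν * routeP b k i

lemma sum_sum_filter_comm {α β M : Type*} [Fintype β] [AddCommMonoid M] (s : Finset α)
    (p : α → β → Prop) [∀ x y, Decidable (p x y)] (g : α → β → M) :
    ∑ x ∈ s, ∑ y ∈ Finset.univ.filter (p x), g x y
      = ∑ y, ∑ x ∈ s.filter (p · y), g x y :=
  Finset.sum_comm' fun x y => by simp

variable {lam : Fin J → ℝ} {ν : ℝ} {θ : (Fin J → ℕ) → ℝ}

lemma ReducedBalance.slice_balance (hbal : ReducedBalance lam b ν θ) (i : Fin J) (a : ℕ) :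
    lam i * ∑ k ∈ (Kslice b i a).filter (fun k => 0 < k i), θ k + sliceUpFlux b ν θ i a
      = lam i * sliceMass b θ i (a + 1)
        + ∑ k ∈ (Kslice b i a).filter (fun k => 0 < k i),
            θ (subE k i) * ν * routeP b (subE k i) i := by
  let outflow : Fin J → ℝ := fun j =>
    ∑ k ∈ (Kslice b i a).filter (fun k => 0 < k j), θ k * lam j
      + ∑ k ∈ (Kslice b i a).filter (fun k => k j < b j), θ k * ν * routeP b k j
  let inflow : Fin J → ℝ := fun j =>
    ∑ k ∈ (Kslice b i a).filter (fun k => k j < b j), θ (addE k j) * lam j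
      + ∑ k ∈ (Kslice b i a).filter (fun k => 0 < k j), θ (subE k j) * ν * routeP b (subE k j) j
  have htotal : ∑ j, outflow j = ∑ j, inflow j := by
    have h := Finset.sum_congr (rfl : Kslice b i a = _) fun k hk =>
      hbal k (mem_Kfin.1 (mem_Kslice.1 hk).1)
    simp only [mul_add, Finset.mul_sum, Finset.sum_add_distrib, sum_sum_filter_comm] at h
    simpa [outflow, inflow, Finset.sum_add_distrib, mul_comm, mul_assoc, mul_left_comm] using h
  have hother : ∑ j ∈ Finset.univ.erase i, outflow j = ∑ j ∈ Finset.univ.erase i, inflow j := by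
    refine Finset.sum_congr rfl fun j hj => ?_
    have hji := Finset.ne_of_mem_erase hj
    have hdemand := sum_Kslice_addE_of_ne (b := b) hji a fun k => θ k * lam j
    have hsupply := sum_Kslice_addE_of_ne (b := b) hji a
      fun k => θ (subE k j) * ν * routeP b (subE k j) j
    simp only [subE_addE] at hsupply
    simp only [outflow, inflow, hdemand, ← hsupply]
  have hself : outflow i = inflow i := by
    rw [← Finset.add_sum_erase _ _ (Finset.mem_univ i),
      ← Finset.add_sum_erase _ _ (Finset.mem_univ i), hother] at htotal
    exact add_right_cancel htotal
  have hmass := sum_Kslice_addE_self (b := b) (i := i) a fun k => θ k * lam i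
  simp only [outflow, inflow] at hself
  rw [hmass, ← Finset.sum_mul, ← Finset.sum_mul] at hself
  rw [sliceUpFlux, sliceMass]
  linarith

lemma ReducedBalance.lam_mul_sliceMass_succ (hbal : ReducedBalance lam b ν θ) (i : Fin J)
    (a : ℕ) :
    lam i * sliceMass b θ i (a + 1) = sliceUpFlux b ν θ i a := by
  induction a with
  | zero =>
    have h := hbal.slice_balance i 0
    rw [Finset.filter_false_of_mem fun k hk => by simp [(mem_Kslice.1 hk).2]] at h
    simpa using h.symm
  | succ a ih =>
    have h := hbal.slice_balance i (a + 1)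
    have hpos : (Kslice b i (a + 1)).filter (fun k => 0 < k i) = Kslice b i (a + 1) :=
      Finset.filter_true_of_mem fun k hk => by simp [(mem_Kslice.1 hk).2]
    have hdown : ∑ k ∈ Kslice b i (a + 1), θ (subE k i) * ν * routeP b (subE k i) i
        = sliceUpFlux b ν θ i a := by
      rw [sliceUpFlux, ← sum_Kslice_addE_self]
      simp only [subE_addE]
    rw [hpos, hdown, ← sliceMass] at h
    linarith

lemma Mset_eq_singleton (h : ∀ j ≠ i, b j - k j < b i - k i) : Mset b k = {i} := by
  have hsup : Finset.univ.sup (fun j => b j - k j) = b i - k i :=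
    le_antisymm (Finset.sup_le fun j _ => by
      rcases eq_or_ne j i with rfl | hj
      exacts [le_rfl, (h j hj).le]) (Finset.le_sup (f := fun j => b j - k j) (Finset.mem_univ i))
  ext j
  rcases eq_or_ne j i with rfl | hj
  · simp [Mset, hsup]
  · simp [Mset, hsup, hj, (h j hj).ne]

lemma routeP_eq_one (h : ∀ j ≠ i, b j - k j < b i - k i) : routeP b k i = 1 := by
  simp [routeP, Mset_eq_singleton h]

lemma sliceUpFlux_eq {a : ℕ} (ha : a < b i) (h : ∀ j ≠ i, a + b j < b i) :
    sliceUpFlux b ν θ i a = ν * sliceMass b θ i a := by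
  rw [sliceUpFlux, sliceMass, Finset.mul_sum]
  refine Finset.sum_congr (Finset.filter_true_of_mem fun k hk => ?_) fun k hk => ?_
  · rwa [(mem_Kslice.1 hk).2]
  · obtain ⟨-, hka⟩ := mem_Kslice.1 hk
    rw [routeP_eq_one fun j hj => by have := h j hj; omega]
    ring

theorem ReducedBalance.sliceMass_eq_geometric (hbal : ReducedBalance lam b ν θ)
    (hlam : lam i ≠ 0) {n : ℕ} (hn : n ≤ b i) (h : ∀ j ≠ i, n + b j ≤ b i) :
    sliceMass b θ i n = sliceMass b θ i 0 * (ν / lam i) ^ n := by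
  induction n with
  | zero => simp
  | succ n ih =>
    have hstep : lam i * sliceMass b θ i (n + 1) = ν * sliceMass b θ i n := by
      rw [hbal.lam_mul_sliceMass_succ, sliceUpFlux_eq (by omega) fun j hj => by
        have := h j hj; omega]
    rw [pow_succ, ← mul_assoc, ← ih (by omega) fun j hj => by have := h j hj; omega]
    field_simp
    linarith

end Inventory

lemma sliceMass_fin_two (b : Fin 2 → ℕ) (θ : (Fin 2 → ℕ) → ℝ) {a : ℕ} (ha : a ≤ b 0) :
    sliceMass b θ 0 a = ∑ c ∈ Finset.range (b 1 + 1), θ ![a, c] := by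
  have hvec : ∀ k ∈ Kslice b 0 a, ![a, k 1] = k := fun k hk => by
    ext j; fin_cases j <;> simp [(mem_Kslice.1 hk).2]
  refine Finset.sum_nbij' (· 1) (![a, ·]) (fun k hk => ?_) (fun c hc => ?_) hvec
    (fun c _ => rfl) fun k hk => by rw [hvec k hk]
  · simpa [Nat.lt_succ_iff] using (mem_Kfin.1 (mem_Kslice.1 hk).1) 1
  · simp only [Finset.mem_range] at hc
    simp [mem_Kslice, mem_Kfin, Fin.forall_fin_two, ha]
    omega

theorem two_locations_marginal_Y1_geometric_general
    (lam : Fin 2 → ℝ) (hlam : ∀ j, 0 < lam j)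
    (b : Fin 2 → ℕ) (hb12 : b 1 ≤ b 0)
    (ν : ℝ)
    (θ : (Fin 2 → ℕ) → ℝ)
    (hbal : ReducedBalance lam b ν θ) :
    ∀ ℓ₁ : ℕ, ℓ₁ ≤ b 0 - b 1 →
      ∑ k₂ ∈ Finset.range (b 1 + 1), θ ![ℓ₁, k₂]
        = (∑ k₂ ∈ Finset.range (b 1 + 1), θ ![0, k₂]) * (ν / lam 0) ^ ℓ₁ := by
  intro ℓ hℓ
  rw [← sliceMass_fin_two b θ (by omega), ← sliceMass_fin_two b θ (Nat.zero_le _)]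
  exact hbal.sliceMass_eq_geometric (hlam 0).ne' (by omega) fun j hj => by
    rw [Fin.eq_one_of_ne_zero j hj]; omega

/-- two heterogeneous locations, geometric form of the marginal
distribution of the first inventory below `b₁ - b₂`. -/
theorem two_locations_marginal_Y1_geometric
    (lam : Fin 2 → ℝ) (hlam : ∀ j, 0 < lam j)
    (b : Fin 2 → ℕ) (hb : ∀ j, 1 ≤ b j) (hb12 : b 1 ≤ b 0)
    (ν : ℝ) (hν : 0 < ν)
    (θ : (Fin 2 → ℕ) → ℝ)
    (hθnn : ∀ k : Fin 2 → ℕ, (∀ j, k j ≤ b j) → 0 ≤ θ k)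
    (hbal : ReducedBalance lam b ν θ)
    (hmass : ∑ k ∈ Kfin b, θ k = 1) :
    ∀ ℓ₁ : ℕ, ℓ₁ ≤ b 0 - b 1 →
      ∑ k₂ ∈ Finset.range (b 1 + 1), θ ![ℓ₁, k₂]
        = (∑ k₂ ∈ Finset.range (b 1 + 1), θ ![0, k₂]) * (ν / lam 0) ^ ℓ₁ :=
  two_locations_marginal_Y1_geometric_general lam hlam b hb12 ν θ hbal
end
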